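/- For every m ∈ ℕ and every probability distribution μ on ℕ, the expected total variation risk of the empirical measure is bounded by the expectation of the empirical half-norm statistic: E[‖μ̂_m − μ‖_TV] ≤ E[Φ_m(μ̂_m)], where the expectation is over an i.i.d. sample X = (X_1,...,X_m) ~ μ^m. -/

import Mathlib

/-!
Both expectations are sums over atoms `i` of expectations of functions of the number `N` of
sample points equal to `i`, and `N ~ Bin(m, p)` with `p = μ i`; so it suffices that
`E|N - mp| ≤ 2 E√N`. As `N - mp` has mean zero, `E|N - mp| = 2 E(mp - N)⁺`, and
`E|N - mp| ≤ √(mp)` by Cauchy–Schwarz. If `mp ≥ 1`, the pointwise bound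
`√N ≥ √(mp) - (mp - N)⁺ / √(mp)` gives `E√N ≥ √(mp) - 1/2 ≥ √(mp) / 2`. If `mp < 1`, only
`N = 0` contributes to `(mp - N)⁺`, so `E|N - mp| = 2 mp (1 - p)^m`, while
`E√N ≥ P(N ≥ 1) = 1 - (1 - p)^m ≥ mp (1 - p)^m` by Bernoulli's inequality.
-/

open scoped BigOperators

/-- The empirical measure induced by a sample `x` of size `m`:
`μ̂_m(i) = (1/m) ∑_t 1{x_t = i}`. -/
noncomputable def empMeas (m : ℕ) (x : Fin m → ℕ) (i : ℕ) : ℝ :=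
  ((Finset.univ.filter (fun t => x t = i)).card : ℝ) / m

/-- Total variation distance `(1/2) ∑_i |μ(i) - ν(i)|`. -/
noncomputable def tvDist (μ ν : ℕ → ℝ) : ℝ := (1 / 2) * ∑' i, |μ i - ν i|

/-- `Φ_m(ν) = (1/√m) ∑_j √(ν j)`. -/
noncomputable def Phi (m : ℕ) (ν : ℕ → ℝ) : ℝ :=
  (1 / Real.sqrt m) * ∑' j, Real.sqrt (ν j)

/-- `μ` is a probability distribution on ℕ. -/
def IsProb (μ : ℕ → ℝ) : Prop := (∀ i, 0 ≤ μ i) ∧ ∑' i, μ i = 1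

/-- Probability of the event `A` under the i.i.d. product `μ^m`. -/
noncomputable def probOf (μ : ℕ → ℝ) (m : ℕ) (A : Set (Fin m → ℕ)) : ℝ :=
  ∑' x : Fin m → ℕ, Set.indicator A (fun y => ∏ t, μ (y t)) x

/-- Expectation of `f` under the i.i.d. product `μ^m`. -/
noncomputable def expect (μ : ℕ → ℝ) (m : ℕ) (f : (Fin m → ℕ) → ℝ) : ℝ :=
  ∑' x : Fin m → ℕ, (∏ t, μ (x t)) * f x

/-- Empirical Rademacher complexity of the class of all boolean functions on ℕ,
conditional on the sample `x`:
`R̂_m(x) = E_σ [ sup_{f : ℕ → {0,1}} (1/m) ∑_t σ_t f(x_t) ]`,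
with `σ` uniform on `{-1,1}^m`. -/
noncomputable def empRad (m : ℕ) (x : Fin m → ℕ) : ℝ :=
  (1 / 2 ^ m) * ∑ σ : Fin m → Bool,
    sSup (Set.range (fun f : ℕ → Bool =>
      (1 / (m : ℝ)) * ∑ t, (if σ t then (1 : ℝ) else -1) * (if f (x t) then (1 : ℝ) else 0)))

/-- `Λ_m(μ) = ∑_{j : μ(j) < 1/m} μ(j) + (1/(2√m)) ∑_{j : μ(j) ≥ 1/m} √(μ(j))`. -/
noncomputable def Lam (m : ℕ) (μ : ℕ → ℝ) : ℝ :=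
  (∑' j, Set.indicator {j | μ j < 1 / (m : ℝ)} μ j)
    + (1 / (2 * Real.sqrt m)) *
      ∑' j, Set.indicator {j | 1 / (m : ℝ) ≤ μ j} (fun j => Real.sqrt (μ j)) j

/-- The half-norm `‖ν‖_{1/2} = (∑_i √(ν i))²`. -/
noncomputable def hfnrm (ν : ℕ → ℝ) : ℝ := (∑' i, Real.sqrt (ν i)) ^ 2

/-- `T_μ(η)` with respect to a non-increasing rearrangement `π` of `μ`:
the least `t` such that the tail mass beyond the `t` largest atoms is `< η`
(ranks are 0-indexed). -/
noncomputable def truncT (μ : ℕ → ℝ) (π : ℕ ≃ ℕ) (η : ℝ) : ℕ :=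
  sInf {t : ℕ | ∑' i, μ (π (i + t)) < η}

/-- The truncation `μ[η]`: keep only the `T_μ(η)` largest atoms of `μ`
(as ranked by the non-increasing rearrangement `π`). -/
noncomputable def trunc (μ : ℕ → ℝ) (π : ℕ ≃ ℕ) (η : ℝ) (i : ℕ) : ℝ :=
  Set.indicator {i | π.symm i < truncT μ π η} μ i

/-- `binomExpect p n g` is `E[g(N)]` for `N ~ Bin(n, p)`, defined by conditioning on the first
trial. -/
noncomputable def binomExpect (p : ℝ) : ℕ → (ℕ → ℝ) → ℝ
  | 0, g => g 0
  | n + 1, g => p * binomExpect p n (fun k => g (k + 1)) + (1 - p) * binomExpect p n g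

section Binomial

variable {p : ℝ} {n : ℕ}

theorem binomExpect_zero (g : ℕ → ℝ) : binomExpect p 0 g = g 0 := rfl

theorem binomExpect_succ (g : ℕ → ℝ) :
    binomExpect p (n + 1) g =
      p * binomExpect p n (fun k => g (k + 1)) + (1 - p) * binomExpect p n g := rfl

theorem binomExpect_add (f g : ℕ → ℝ) :
    binomExpect p n (fun k => f k + g k) = binomExpect p n f + binomExpect p n g := by
  induction n generalizing f g with
  | zero => rfl
  | succ n ih => simp only [binomExpect_succ, ih]; ring

theorem binomExpect_const_mul (c : ℝ) (g : ℕ → ℝ) :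
    binomExpect p n (fun k => c * g k) = c * binomExpect p n g := by
  induction n generalizing g with
  | zero => rfl
  | succ n ih => simp only [binomExpect_succ, ih]; ring

theorem binomExpect_sub (f g : ℕ → ℝ) :
    binomExpect p n (fun k => f k - g k) = binomExpect p n f - binomExpect p n g := by
  induction n generalizing f g with
  | zero => rfl
  | succ n ih => simp only [binomExpect_succ, ih]; ring

theorem binomExpect_const (c : ℝ) : binomExpect p n (fun _ => c) = c := by
  induction n with
  | zero => rfl
  | succ n ih => rw [binomExpect_succ, ih]; ring

theorem binomExpect_natCast : binomExpect p n (fun k => (k : ℝ)) = n * p := by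
  induction n with
  | zero => simp [binomExpect_zero]
  | succ n ih =>
    simp only [binomExpect_succ, Nat.cast_add, Nat.cast_one, binomExpect_add, binomExpect_const,
      ih]
    ring

theorem binomExpect_natCast_sq :
    binomExpect p n (fun k => (k : ℝ) ^ 2) = n * (n - 1) * p ^ 2 + n * p := by
  induction n with
  | zero => simp [binomExpect_zero]
  | succ n ih =>
    simp only [binomExpect_succ, Nat.cast_add, Nat.cast_one, add_sq, binomExpect_add,
      binomExpect_const_mul, mul_one, one_pow, binomExpect_const, ih, binomExpect_natCast]
    ring

theorem binomExpect_sq_sub_mean :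
    binomExpect p n (fun k => ((k : ℝ) - n * p) ^ 2) = n * p * (1 - p) := by
  have hexpand : (fun k : ℕ => ((k : ℝ) - n * p) ^ 2)
      = fun k : ℕ => ((k : ℝ) ^ 2 - 2 * n * p * k) + (n * p) ^ 2 := by
    funext k; ring
  rw [hexpand, binomExpect_add, binomExpect_sub, binomExpect_const_mul, binomExpect_const,
    binomExpect_natCast, binomExpect_natCast_sq]
  ring

theorem binomExpect_eq_of_eq_zero {g : ℕ → ℝ} (hg : ∀ k, k ≠ 0 → g k = 0) :
    binomExpect p n g = (1 - p) ^ n * g 0 := by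
  induction n with
  | zero => simp [binomExpect_zero]
  | succ n ih =>
    have hshift : (fun k => g (k + 1)) = fun _ => 0 := funext fun k => hg _ k.succ_ne_zero
    rw [binomExpect_succ, hshift, binomExpect_const, ih]
    ring

variable (hp₀ : 0 ≤ p) (hp₁ : p ≤ 1)
include hp₀ hp₁

theorem binomExpect_mono {f g : ℕ → ℝ} (h : ∀ k, f k ≤ g k) :
    binomExpect p n f ≤ binomExpect p n g := by
  induction n generalizing f g with
  | zero => exact h 0
  | succ n ih =>
    have h₁ := ih fun k => h (k + 1)
    have h₂ := ih h
    simp only [binomExpect_succ]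
    gcongr

theorem binomExpect_nonneg {g : ℕ → ℝ} (h : ∀ k, 0 ≤ g k) : 0 ≤ binomExpect p n g := by
  simpa only [binomExpect_const] using binomExpect_mono hp₀ hp₁ (f := fun _ => 0) h

theorem sq_binomExpect_le (g : ℕ → ℝ) :
    binomExpect p n g ^ 2 ≤ binomExpect p n (fun k => g k ^ 2) := by
  induction n generalizing g with
  | zero => rfl
  | succ n ih =>
    have h₁ := ih fun k => g (k + 1)
    have h₂ := ih g
    simp only [binomExpect_succ]
    nlinarith [mul_nonneg (mul_nonneg hp₀ (sub_nonneg.2 hp₁))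
      (sq_nonneg (binomExpect p n (fun k => g (k + 1)) - binomExpect p n g))]

end Binomial

theorem one_add_mul_mul_one_sub_pow_le_one {p : ℝ} (hp₀ : 0 ≤ p) (hp₁ : p ≤ 1) (n : ℕ) :
    (1 + n * p) * (1 - p) ^ n ≤ 1 :=
  calc (1 + n * p) * (1 - p) ^ n ≤ (1 + p) ^ n * (1 - p) ^ n := by
        gcongr
        exact one_add_mul_le_pow (by linarith) n
    _ = (1 - p ^ 2) ^ n := by rw [← mul_pow]; ring
    _ ≤ 1 := pow_le_one₀ (by nlinarith) (by nlinarith)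

theorem Real.sqrt_sub_max_sub_div_sqrt_le {a b : ℝ} (ha : 0 < a) (hb : 0 ≤ b) :
    √a - max (a - b) 0 / √a ≤ √b := by
  have hsa : 0 < √a := Real.sqrt_pos.2 ha
  rcases le_total a b with hab | hab
  · simpa [max_eq_right (sub_nonpos.2 hab)] using Real.sqrt_le_sqrt hab
  · have hba : √b ≤ √a := Real.sqrt_le_sqrt hab
    have key : √a - (a - b) / √a = √b * (√b / √a) := by
      field_simp
      rw [Real.sq_sqrt ha.le, Real.sq_sqrt hb]
      ring
    rw [max_eq_left (sub_nonneg.2 hab), key]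
    exact mul_le_of_le_one_right (Real.sqrt_nonneg b) ((div_le_one hsa).2 hba)

section MeanAbsoluteDeviation

variable {p : ℝ} {n : ℕ}

theorem binomExpect_abs_sub_mean :
    binomExpect p n (fun k => |(k : ℝ) - n * p|) =
      2 * binomExpect p n (fun k => max (n * p - k) 0) := by
  have hsplit : (fun k : ℕ => |(k : ℝ) - n * p|)
      = fun k : ℕ => 2 * max (n * p - k) 0 + ((k : ℝ) - n * p) := by
    funext k
    rcases le_total (n * p) (k : ℝ) with h | h
    · rw [abs_of_nonneg (by linarith), max_eq_right (by linarith)]; ring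
    · rw [abs_of_nonpos (by linarith), max_eq_left (by linarith)]; ring
  rw [hsplit, binomExpect_add, binomExpect_const_mul, binomExpect_sub, binomExpect_natCast,
    binomExpect_const]
  ring

variable (hp₀ : 0 ≤ p) (hp₁ : p ≤ 1)
include hp₀ hp₁

theorem binomExpect_abs_sub_mean_le_sqrt :
    binomExpect p n (fun k => |(k : ℝ) - n * p|) ≤ √(n * p) := by
  refine Real.le_sqrt_of_sq_le ?_
  calc binomExpect p n (fun k => |(k : ℝ) - n * p|) ^ 2
      ≤ binomExpect p n (fun k => ((k : ℝ) - n * p) ^ 2) := by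
        simpa only [sq_abs] using sq_binomExpect_le hp₀ hp₁ (fun k => |(k : ℝ) - n * p|)
    _ = n * p * (1 - p) := binomExpect_sq_sub_mean
    _ ≤ n * p := mul_le_of_le_one_right (by positivity) (by linarith)

theorem binomExpect_abs_sub_mean_le_two_mul_sqrt_of_one_le (h : 1 ≤ n * p) :
    binomExpect p n (fun k => |(k : ℝ) - n * p|) ≤ 2 * binomExpect p n (fun k => √(k : ℝ)) := by
  have hl : 0 < (n : ℝ) * p := by linarith
  have hsl : 1 ≤ √(n * p) := Real.one_le_sqrt.2 h
  have hD := binomExpect_abs_sub_mean_le_sqrt hp₀ hp₁ (n := n)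
  have hS : √(n * p) - binomExpect p n (fun k => max (n * p - k) 0) / √(n * p)
      ≤ binomExpect p n (fun k => √(k : ℝ)) := by
    have := binomExpect_mono hp₀ hp₁ (n := n)
      fun k => Real.sqrt_sub_max_sub_div_sqrt_le hl (Nat.cast_nonneg k)
    simp only [div_eq_inv_mul] at this ⊢
    rwa [binomExpect_sub, binomExpect_const, binomExpect_const_mul] at this
  rw [binomExpect_abs_sub_mean] at hD ⊢
  have hhalf : binomExpect p n (fun k => max (n * p - k) 0) / √(n * p) ≤ 1 / 2 := by
    rw [div_le_iff₀ (by linarith)]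
    linarith
  linarith

theorem binomExpect_abs_sub_mean_le_two_mul_sqrt_of_lt_one (h : n * p < 1) :
    binomExpect p n (fun k => |(k : ℝ) - n * p|) ≤ 2 * binomExpect p n (fun k => √(k : ℝ)) := by
  have hM : binomExpect p n (fun k => max (n * p - k) 0) = (1 - p) ^ n * (n * p) := by
    rw [binomExpect_eq_of_eq_zero fun k hk => ?_]
    · simp [mul_nonneg (Nat.cast_nonneg n) hp₀]
    · have : (1 : ℝ) ≤ k := Nat.one_le_cast.2 (Nat.one_le_iff_ne_zero.2 hk)
      exact max_eq_right (by linarith)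
  have hS : 1 - (1 - p) ^ n ≤ binomExpect p n (fun k => √(k : ℝ)) := by
    have := binomExpect_mono hp₀ hp₁ (n := n) (f := fun k => 1 - if k = 0 then 1 else 0)
      (g := fun k => √(k : ℝ)) fun k => by
        rcases eq_or_ne k 0 with rfl | hk
        · simp
        · simpa [hk] using Nat.one_le_iff_ne_zero.2 hk
    rwa [binomExpect_sub, binomExpect_const,
      binomExpect_eq_of_eq_zero fun k hk => if_neg hk, if_pos rfl, mul_one] at this
  have hbern := one_add_mul_mul_one_sub_pow_le_one hp₀ hp₁ n
  rw [binomExpect_abs_sub_mean, hM]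
  linarith

end MeanAbsoluteDeviation

section Scaled

variable {p : ℝ} (hp₀ : 0 ≤ p) (hp₁ : p ≤ 1)
include hp₀ hp₁

theorem binomExpect_abs_sub_mean_le_two_mul_sqrt (n : ℕ) :
    binomExpect p n (fun k => |(k : ℝ) - n * p|) ≤ 2 * binomExpect p n (fun k => √(k : ℝ)) := by
  rcases le_or_gt 1 ((n : ℝ) * p) with h | h
  · exact binomExpect_abs_sub_mean_le_two_mul_sqrt_of_one_le hp₀ hp₁ h
  · exact binomExpect_abs_sub_mean_le_two_mul_sqrt_of_lt_one hp₀ hp₁ h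

theorem binomExpect_abs_div_sub_le {m : ℕ} (hm : 0 < m) :
    binomExpect p m (fun k => |(k : ℝ) / m - p|) ≤
      2 / √m * binomExpect p m (fun k => √((k : ℝ) / m)) := by
  have hm' : (0 : ℝ) < m := Nat.cast_pos.2 hm
  have habs : (fun k : ℕ => |(k : ℝ) / m - p|) = fun k : ℕ => (m : ℝ)⁻¹ * |(k : ℝ) - m * p| := by
    funext k
    rw [← abs_of_pos (inv_pos.2 hm'), ← abs_mul]
    congr 1
    field_simp
  have hsqrt : (fun k : ℕ => √((k : ℝ) / m)) = fun k : ℕ => (√m)⁻¹ * √(k : ℝ) := by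
    funext k
    rw [Real.sqrt_div (Nat.cast_nonneg k), div_eq_inv_mul]
  rw [habs, hsqrt, binomExpect_const_mul, binomExpect_const_mul, ← mul_assoc]
  have hcoef : 2 / √m * (√m)⁻¹ = (m : ℝ)⁻¹ * 2 := by
    rw [div_mul_eq_mul_div, div_eq_mul_inv, mul_assoc, ← mul_inv, Real.mul_self_sqrt hm'.le]
    ring
  rw [hcoef, mul_assoc]
  exact mul_le_mul_of_nonneg_left (binomExpect_abs_sub_mean_le_two_mul_sqrt hp₀ hp₁ m)
    (inv_nonneg.2 hm'.le)

theorem binomExpect_sqrt_div_le {m : ℕ} (hm : 0 < m) :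
    binomExpect p m (fun k => √((k : ℝ) / m)) ≤ m * p := by
  rw [← binomExpect_natCast]
  refine binomExpect_mono hp₀ hp₁ fun k => ?_
  calc √((k : ℝ) / m) ≤ √(k : ℝ) :=
        Real.sqrt_le_sqrt (div_le_self (Nat.cast_nonneg k) (Nat.one_le_cast.2 hm))
    _ ≤ k := by
        rcases eq_or_ne k 0 with rfl | hk
        · simp
        · exact Real.sqrt_le_self_iff.2 (Or.inr (Nat.one_le_cast.2 (Nat.one_le_iff_ne_zero.2 hk)))

end Scaled

theorem HasSum.of_prod_fiberwise_of_nonneg {β γ : Type*} {f : β × γ → ℝ} {g : β → ℝ} {a : ℝ}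
    (hf : 0 ≤ f) (hfib : ∀ b, HasSum (fun c => f (b, c)) (g b)) (hg : HasSum g a) :
    HasSum f a := by
  have hs : Summable f := (summable_prod_of_nonneg hf).2
    ⟨fun b => (hfib b).summable, hg.summable.congr fun b => ((hfib b).tsum_eq).symm⟩
  exact hg.unique (hs.hasSum.prod_fiberwise hfib) ▸ hs.hasSum

theorem tsum_comm_of_nonneg {β γ : Type*} {f : β → γ → ℝ} (hf : ∀ b c, 0 ≤ f b c)
    (hfib : ∀ c, Summable (f · c)) (hs : Summable fun c => ∑' b, f b c) :
    ∑' b, ∑' c, f b c = ∑' c, ∑' b, f b c := by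
  have hswap : Summable fun z : γ × β => f z.2 z.1 :=
    (summable_prod_of_nonneg fun z => hf z.2 z.1).2 ⟨hfib, hs⟩
  have hunc : Summable (Function.uncurry f) := hswap.prod_symm
  exact (hunc.tsum_comm' hunc.prod_factor hfib).symm

/-- `empMeas m x i` is definitionally `sampleCount x i / m`. -/
def sampleCount {n : ℕ} (x : Fin n → ℕ) (i : ℕ) : ℕ := (Finset.univ.filter (fun t => x t = i)).card

theorem sampleCount_cons {n : ℕ} (a : ℕ) (y : Fin n → ℕ) (i : ℕ) :
    sampleCount (Fin.cons a y : Fin (n + 1) → ℕ) i = sampleCount y i + if a = i then 1 else 0 := by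
  simp only [sampleCount, Finset.card_filter, Fin.sum_univ_succ, Fin.cons_zero, Fin.cons_succ]
  ring

theorem hasSum_prod_mul_sampleCount {μ : ℕ → ℝ} (hμ₀ : ∀ j, 0 ≤ μ j) (hμ : HasSum μ 1) (i n : ℕ)
    {g : ℕ → ℝ} (hg : ∀ k, 0 ≤ g k) :
    HasSum (fun x : Fin n → ℕ => (∏ t, μ (x t)) * g (sampleCount x i)) (binomExpect (μ i) n g) := by
  induction n generalizing g with
  | zero => simp [sampleCount, binomExpect_zero, hasSum_unique]
  | succ n ih =>
    set c₁ := binomExpect (μ i) n (fun k => g (k + 1))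
    set c₀ := binomExpect (μ i) n g
    have hfib : ∀ a, HasSum
        (fun y : Fin n → ℕ => (∏ t, μ ((Fin.cons a y : Fin (n + 1) → ℕ) t)) *
          g (sampleCount (Fin.cons a y : Fin (n + 1) → ℕ) i))
        (μ a * binomExpect (μ i) n (fun k => g (k + if a = i then 1 else 0))) := fun a =>
      ((ih fun k => hg _).mul_left (μ a)).congr_fun fun y => by
        simp only [sampleCount_cons, Fin.prod_univ_succ, Fin.cons_zero, Fin.cons_succ]
        ring
    have hterm : ∀ a, μ a * binomExpect (μ i) n (fun k => g (k + if a = i then 1 else 0))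
        = c₀ * μ a + (Pi.single i (μ i * (c₁ - c₀)) : ℕ → ℝ) a := fun a => by
      rcases eq_or_ne a i with rfl | h
      · simp only [if_pos, Pi.single_eq_same, c₁, c₀]; ring
      · simp only [h, if_false, add_zero, ne_eq, not_false_eq_true, Pi.single_eq_of_ne, c₀]; ring
    have hsum : binomExpect (μ i) (n + 1) g = c₀ * 1 + μ i * (c₁ - c₀) := by
      rw [binomExpect_succ]; ring
    rw [hsum]
    exact (Fin.consEquiv fun _ => ℕ).hasSum_iff.1 <| HasSum.of_prod_fiberwise_of_nonneg
      (fun z => mul_nonneg (Finset.prod_nonneg fun t _ => hμ₀ _) (hg _)) hfib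
      (((hμ.mul_left c₀).add (hasSum_pi_single i _)).congr_fun hterm)

theorem IsProb.hasSum {μ : ℕ → ℝ} (hμ : IsProb μ) : HasSum μ 1 := by
  have hs : Summable μ := by
    by_contra h
    simpa [tsum_eq_zero_of_not_summable h] using hμ.2
  exact hμ.2 ▸ hs.hasSum

theorem expect_const_mul (μ : ℕ → ℝ) (m : ℕ) (c : ℝ) (f : (Fin m → ℕ) → ℝ) :
    expect μ m (fun x => c * f x) = c * expect μ m f := by
  simp only [expect, mul_left_comm _ c, tsum_mul_left]

theorem expect_tsum_sampleCount {μ : ℕ → ℝ} (hμ₀ : ∀ j, 0 ≤ μ j) (hμ : HasSum μ 1) {m : ℕ}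
    {g : ℕ → ℕ → ℝ} (hg : ∀ i k, 0 ≤ g i k) (hs : Summable fun i => binomExpect (μ i) m (g i)) :
    expect μ m (fun x => ∑' i, g i (sampleCount x i)) = ∑' i, binomExpect (μ i) m (g i) := by
  have hcoord i := hasSum_prod_mul_sampleCount hμ₀ hμ i m (hg i)
  simp only [expect, ← tsum_mul_left]
  rw [tsum_comm_of_nonneg (fun x i => mul_nonneg (Finset.prod_nonneg fun t _ => hμ₀ _) (hg _ _))
    (fun i => (hcoord i).summable) (by simpa only [(hcoord _).tsum_eq] using hs)]
  exact tsum_congr fun i => (hcoord i).tsum_eq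

/-- For every `m ∈ ℕ` and probability distribution `μ` on ℕ,
`E[‖μ̂_m - μ‖_TV] ≤ E[Φ_m(μ̂_m)]`. -/
theorem expected_tv_le_expected_Phi (m : ℕ) (hm : 0 < m) (μ : ℕ → ℝ) (hμ : IsProb μ) :
    expect μ m (fun x => tvDist (empMeas m x) μ) ≤
      expect μ m (fun x => Phi m (empMeas m x)) := by
  have hμ₁ := hμ.hasSum
  have hp : ∀ i, 0 ≤ μ i ∧ μ i ≤ 1 := fun i => ⟨hμ.1 i, le_hasSum hμ₁ i fun j _ => hμ.1 j⟩
  set dev : ℕ → ℕ → ℝ := fun i k => |(k : ℝ) / m - μ i|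
  set root : ℕ → ℕ → ℝ := fun _ k => √((k : ℝ) / m)
  have hkey : ∀ i, binomExpect (μ i) m (dev i) ≤ 2 / √m * binomExpect (μ i) m (root i) :=
    fun i => binomExpect_abs_div_sub_le (hp i).1 (hp i).2 hm
  have hroot : Summable fun i => binomExpect (μ i) m (root i) :=
    Summable.of_nonneg_of_le
      (fun i => binomExpect_nonneg (hp i).1 (hp i).2 fun k => Real.sqrt_nonneg _)
      (fun i => binomExpect_sqrt_div_le (hp i).1 (hp i).2 hm) (hμ₁.summable.mul_left (m : ℝ))
  have hdev : Summable fun i => binomExpect (μ i) m (dev i) :=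
    Summable.of_nonneg_of_le (fun i => binomExpect_nonneg (hp i).1 (hp i).2 fun k => abs_nonneg _)
      hkey (hroot.mul_left _)
  calc expect μ m (fun x => tvDist (empMeas m x) μ)
      = 1 / 2 * ∑' i, binomExpect (μ i) m (dev i) := by
        rw [← expect_tsum_sampleCount hμ.1 hμ₁ (fun i k => abs_nonneg _) hdev]
        exact expect_const_mul μ m _ _
    _ ≤ 1 / 2 * ∑' i, 2 / √m * binomExpect (μ i) m (root i) :=
        mul_le_mul_of_nonneg_left (hdev.tsum_le_tsum hkey (hroot.mul_left _)) (by norm_num)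
    _ = 1 / √m * ∑' i, binomExpect (μ i) m (root i) := by
        rw [tsum_mul_left]; ring
    _ = expect μ m (fun x => Phi m (empMeas m x)) := by
        rw [← expect_tsum_sampleCount hμ.1 hμ₁ (fun i k => Real.sqrt_nonneg _) hroot]
        exact (expect_const_mul μ m _ _).symm
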